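/- arXiv:1810.08966 — 4 statements merged into one kernel-verified Lean document; each statement's English description precedes it below -/
import Mathlib

section
/- Let 0 < a < 1, 0 < ε < 1, ℓ > 0, and let γ = nπ/ℓ, h = (a + ε γ²)/2. If γ ≥ (1 + √(1 − a ε c))/(ε √c) for some 0 < c < 1, then γ/h ≤ √c, and consequently ω = √(h² − γ²) satisfies ω ≥ h√(1 − c) ≥ ε π² n² √(1 − c)/(2ℓ²). -/
set_option maxHeartbeats 1000000


open Real in
theorem high_mode_frequency_bound (a ε ℓ c : ℝ) (n : ℕ)
    (ha : 0 < a) (ha1 : a < 1) (hε : 0 < ε) (hε1 : ε < 1) (hℓ : 0 < ℓ)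
    (hc : 0 < c) (hc1 : c < 1)
    (γ h : ℝ) (hγ : γ = n * π / ℓ) (hhdef : h = (a + ε * γ ^ 2) / 2)
    (hγge : γ ≥ (1 + Real.sqrt (1 - a * ε * c)) / (ε * Real.sqrt c)) :
    γ / h ≤ Real.sqrt c ∧
      Real.sqrt (h ^ 2 - γ ^ 2) ≥ h * Real.sqrt (1 - c) ∧
      h * Real.sqrt (1 - c) ≥ ε * π ^ 2 * n ^ 2 * Real.sqrt (1 - c) / (2 * ℓ ^ 2) := by
  have hsc : 0 < Real.sqrt c := Real.sqrt_pos.mpr hc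
  have hscsq : Real.sqrt c ^ 2 = c := Real.sq_sqrt hc.le
  have hεc : ε * c < 1 := by nlinarith
  have hac : (0:ℝ) ≤ 1 - a * ε * c := by nlinarith [mul_pos hε hc]
  set s := Real.sqrt (1 - a * ε * c) with hs
  have hs0 : 0 ≤ s := Real.sqrt_nonneg _
  have hssq : s ^ 2 = 1 - a * ε * c := Real.sq_sqrt hac
  have hd : 0 < ε * Real.sqrt c := by positivity
  have hγpos : 0 < γ := lt_of_lt_of_le (by positivity) hγge
  have hmul : ε * Real.sqrt c * γ ≥ 1 + s := by
    rw [ge_iff_le, ← div_le_iff₀' hd]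
    exact hγge
  have h1' : ε * Real.sqrt c * γ - 1 - s ≥ 0 := by linarith
  have h2' : ε * Real.sqrt c * γ - 1 + s ≥ 0 := by linarith
  have e2 : (ε * Real.sqrt c * γ) ^ 2 = ε ^ 2 * c * γ ^ 2 := by
    linear_combination (ε ^ 2 * γ ^ 2) * hscsq
  have e : (ε * Real.sqrt c) * (a * Real.sqrt c + ε * Real.sqrt c * γ ^ 2)
      = a * ε * c + ε ^ 2 * c * γ ^ 2 := by
    linear_combination (a * ε + ε ^ 2 * γ ^ 2) * hscsq
  have hkey : 2 * (ε * Real.sqrt c * γ) ≤ a * ε * c + ε ^ 2 * c * γ ^ 2 := by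
    nlinarith [mul_nonneg h1' h2', hssq, e2]
  have hquad : 2 * γ ≤ a * Real.sqrt c + ε * Real.sqrt c * γ ^ 2 := by
    have h3 : (ε * Real.sqrt c) * (2 * γ)
        ≤ (ε * Real.sqrt c) * (a * Real.sqrt c + ε * Real.sqrt c * γ ^ 2) := by
      rw [e]; linarith [hkey]
    exact le_of_mul_le_mul_left h3 hd
  have hh : 0 < h := by rw [hhdef]; positivity
  have h1 : γ / h ≤ Real.sqrt c := by
    rw [div_le_iff₀ hh, hhdef]
    nlinarith [hquad]
  have hγle : γ ≤ Real.sqrt c * h := (div_le_iff₀ hh).mp h1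
  have e4 : (Real.sqrt c * h) ^ 2 = c * h ^ 2 := by linear_combination h ^ 2 * hscsq
  have hγ2 : γ ^ 2 ≤ c * h ^ 2 := by
    have := mul_le_mul hγle hγle hγpos.le (by positivity)
    nlinarith [e4, this]
  have hs1c : (0:ℝ) ≤ 1 - c := by linarith
  refine ⟨h1, ?_, ?_⟩
  · have heq : h * Real.sqrt (1 - c) = Real.sqrt ((1 - c) * h ^ 2) := by
      rw [Real.sqrt_mul hs1c, Real.sqrt_sq hh.le]; ring
    rw [ge_iff_le, heq]
    apply Real.sqrt_le_sqrt
    nlinarith [hγ2]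
  · have hγℓ : γ * ℓ = n * π := by
      rw [hγ]; exact div_mul_cancel₀ _ hℓ.ne'
    have e5 : ε * γ ^ 2 * ℓ ^ 2 = ε * (n:ℝ) ^ 2 * π ^ 2 := by
      linear_combination (ε * (γ * ℓ + n * π)) * hγℓ
    have hl2 : (0:ℝ) < ℓ ^ 2 := by positivity
    rw [ge_iff_le, div_le_iff₀ (by positivity : (0:ℝ) < 2 * ℓ ^ 2)]
    have key : ε * π ^ 2 * (n:ℝ) ^ 2 ≤ h * (2 * ℓ ^ 2) := by
      rw [hhdef]; nlinarith [e5, mul_pos ha hl2]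
    have hfin := mul_le_mul_of_nonneg_right key (Real.sqrt_nonneg (1 - c))
    nlinarith [hfin]
end

section
/- Let 0 < a < 1, 0 < ε < 1, ℓ > 0, π > 0, and for natural n ≥ 1 set γ_n = nπ/ℓ, h_n = (a + ε γ_n²)/2, ω_n = √(h_n² − γ_n²) whenever h_n ≥ γ_n. Let N₂ be the largest natural number smaller than (ℓ/(πε))(1 + √(1 − aε)). Then there exist positive constants B₁ (independent of ε) such that for all t ≥ 1, ∑_{n=N₂+1}^∞ e^{-h_n t} sinh(ω_n t)/ω_n ≤ B₁ e^{-t/(4ε)}. -/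
/-!
For `n > N₂` the frequency `γ = nπ/ℓ` satisfies `εγ ≥ 1 + √(1 - aε)`, so it lies beyond the larger
root of `εγ² - 2γ + a`; hence `h ≥ γ`, the mode is hyperbolic, and `h - ω ≥ 1/(2ε)`. Each mode is
then at most `e^{-t/(2ε)}` times `t` (from `sinh x ≤ x eˣ`) and times `1/(2ω)` (from
`sinh x ≤ eˣ/2`), where `ω ≥ h - γ ≥ ε q²/2` with `q = (n - N₂ - 1)π/ℓ`. Summing against
`∑ 1/(k+1)² = π²/6` leaves a prefactor `t + ℓ²/(π²ε)`, which is absorbed by half of the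
exponent: `(t/ε) e^{-t/(4ε)}` is bounded.
-/

open Real

lemma Real.sinh_le_mul_exp (x : ℝ) : sinh x ≤ x * exp x := by
  -- equivalent to `1 - e^{-2x} ≤ 2x`
  have h := add_one_le_exp (-(2 * x))
  have hsplit : exp (-(2 * x)) * exp x = exp (-x) := by rw [← exp_add]; ring_nf
  rw [sinh_eq]
  nlinarith [exp_pos x]

lemma Real.sinh_le_exp_div_two (x : ℝ) : sinh x ≤ exp x / 2 := by
  rw [sinh_eq]
  linarith [exp_pos (-x)]

noncomputable def hyperbolicMode (h ω t : ℝ) : ℝ := exp (-h * t) * sinh (ω * t) / ω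

section HyperbolicMode

variable {h ω t c : ℝ}

lemma hyperbolicMode_nonneg (hω : 0 ≤ ω) (ht : 0 ≤ t) : 0 ≤ hyperbolicMode h ω t :=
  div_nonneg (mul_nonneg (exp_nonneg _) (sinh_nonneg_iff.mpr (mul_nonneg hω ht))) hω

lemma exp_neg_mul_mul_exp_le (ht : 0 ≤ t) (hgap : c ≤ h - ω) :
    exp (-h * t) * exp (ω * t) ≤ exp (-c * t) := by
  rw [← exp_add, exp_le_exp]
  nlinarith

lemma hyperbolicMode_le_mul_exp (hω : 0 ≤ ω) (ht : 0 ≤ t) (hgap : c ≤ h - ω) :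
    hyperbolicMode h ω t ≤ t * exp (-c * t) := by
  rcases hω.eq_or_lt with rfl | hω
  · simp only [hyperbolicMode, div_zero]
    positivity
  calc hyperbolicMode h ω t ≤ exp (-h * t) * (ω * t * exp (ω * t)) / ω := by
        unfold hyperbolicMode
        gcongr
        exact sinh_le_mul_exp _
    _ = t * (exp (-h * t) * exp (ω * t)) := by field_simp
    _ ≤ t * exp (-c * t) := by gcongr; exact exp_neg_mul_mul_exp_le ht hgap

lemma hyperbolicMode_le_exp_div (hω : 0 < ω) (ht : 0 ≤ t) (hgap : c ≤ h - ω) :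
    hyperbolicMode h ω t ≤ exp (-c * t) / (2 * ω) := by
  calc hyperbolicMode h ω t ≤ exp (-h * t) * (exp (ω * t) / 2) / ω := by
        unfold hyperbolicMode
        gcongr
        exact sinh_le_exp_div_two _
    _ = exp (-h * t) * exp (ω * t) / (2 * ω) := by field_simp
    _ ≤ exp (-c * t) / (2 * ω) := by gcongr; exact exp_neg_mul_mul_exp_le ht hgap

end HyperbolicMode

/-- With `γ = γ_n`, `damping a ε γ` and `hyperbolicFreq a ε γ` are the paper's `h_n` and `ω_n`. -/
noncomputable def damping (a ε γ : ℝ) : ℝ := (a + ε * γ ^ 2) / 2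

noncomputable def hyperbolicFreq (a ε γ : ℝ) : ℝ := √(damping a ε γ ^ 2 - γ ^ 2)

lemma sub_le_sqrt_sq_sub_sq {h γ : ℝ} (hγ : 0 ≤ γ) (hγh : γ ≤ h) : h - γ ≤ √(h ^ 2 - γ ^ 2) :=
  Real.le_sqrt_of_sq_le (by nlinarith)

section Damping

variable {a ε γ q t : ℝ}

lemma damping_sub_ge (hε : 0 < ε) (haε : a * ε ≤ 1) (hq : 0 ≤ q)
    (hγ : 1 + √(1 - a * ε) + ε * q ≤ ε * γ) : ε * q ^ 2 / 2 ≤ damping a ε γ - γ := by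
  have hs := sq_sqrt (sub_nonneg.mpr haε)
  have hs0 := sqrt_nonneg (1 - a * ε)
  -- the roots of `εγ² - 2γ + a` are `(1 ± √(1 - aε))/ε`
  have key : (ε * q) ^ 2 ≤ ε * (ε * γ ^ 2 - 2 * γ + a) := by
    have : ε * (ε * γ ^ 2 - 2 * γ + a) = (ε * γ - 1) ^ 2 - √(1 - a * ε) ^ 2 := by
      rw [hs]; ring
    rw [this]
    nlinarith [mul_nonneg hε.le hq]
  have : ε * q ^ 2 ≤ ε * γ ^ 2 - 2 * γ + a := by
    refine le_of_mul_le_mul_left ?_ hε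
    nlinarith
  unfold damping
  linarith

lemma hyperbolicFreq_le_damping_sub (hε : 0 < ε) (haε : a * ε ≤ 1) (hγ1 : 1 ≤ ε * γ)
    (hγh : γ ≤ damping a ε γ) : hyperbolicFreq a ε γ ≤ damping a ε γ - 1 / (2 * ε) := by
  have hγ : 1 / ε ≤ γ := by rwa [div_le_iff₀' hε]
  have hhalf : 1 / (2 * ε) ≤ 1 / ε := by gcongr; linarith
  refine sqrt_le_iff.mpr ⟨by linarith, ?_⟩
  have : damping a ε γ ^ 2 - γ ^ 2 - (damping a ε γ - 1 / (2 * ε)) ^ 2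
      = -((2 * ε ^ 2 * γ ^ 2 + 1 - 2 * a * ε) / (4 * ε ^ 2)) := by
    unfold damping; field_simp; ring
  have : 0 ≤ (2 * ε ^ 2 * γ ^ 2 + 1 - 2 * a * ε) / (4 * ε ^ 2) := by
    apply div_nonneg _ (by positivity)
    nlinarith
  linarith

lemma one_div_two_mul_le_damping_sub_hyperbolicFreq (hε : 0 < ε) (haε : a * ε ≤ 1)
    (hγ : 1 + √(1 - a * ε) ≤ ε * γ) :
    1 / (2 * ε) ≤ damping a ε γ - hyperbolicFreq a ε γ := by
  have hγh : γ ≤ damping a ε γ := by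
    have := damping_sub_ge (q := 0) hε haε le_rfl (by simpa using hγ)
    linarith
  have := hyperbolicFreq_le_damping_sub hε haε (by linarith [sqrt_nonneg (1 - a * ε)]) hγh
  linarith

lemma le_hyperbolicFreq (hε : 0 < ε) (haε : a * ε ≤ 1) (hq : 0 ≤ q)
    (hγ : 1 + √(1 - a * ε) + ε * q ≤ ε * γ) : ε * q ^ 2 / 2 ≤ hyperbolicFreq a ε γ := by
  have hgap := damping_sub_ge hε haε hq hγ
  have hγ0 : 0 ≤ γ := by
    by_contra! h
    nlinarith [sqrt_nonneg (1 - a * ε), mul_nonneg hε.le hq]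
  exact hgap.trans (sub_le_sqrt_sq_sub_sq hγ0 (by nlinarith [mul_nonneg hε.le (sq_nonneg q)]))

lemma hyperbolicMode_le_mul_exp_of_tail (hε : 0 < ε) (haε : a * ε ≤ 1)
    (hγ : 1 + √(1 - a * ε) ≤ ε * γ) (ht : 0 ≤ t) :
    hyperbolicMode (damping a ε γ) (hyperbolicFreq a ε γ) t ≤ t * exp (-t / (2 * ε)) := by
  rw [show -t / (2 * ε) = -(1 / (2 * ε)) * t by ring]
  exact hyperbolicMode_le_mul_exp (sqrt_nonneg _) ht
    (one_div_two_mul_le_damping_sub_hyperbolicFreq hε haε hγ)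

lemma hyperbolicMode_le_exp_div_of_tail (hε : 0 < ε) (haε : a * ε ≤ 1) (hq : 0 < q)
    (hγ : 1 + √(1 - a * ε) + ε * q ≤ ε * γ) (ht : 0 ≤ t) :
    hyperbolicMode (damping a ε γ) (hyperbolicFreq a ε γ) t
      ≤ exp (-t / (2 * ε)) / (ε * q ^ 2) := by
  have hgap := one_div_two_mul_le_damping_sub_hyperbolicFreq hε haε
    (by nlinarith [mul_pos hε hq] : 1 + √(1 - a * ε) ≤ ε * γ)
  have hω := le_hyperbolicFreq hε haε hq.le hγ
  calc _ ≤ exp (-(1 / (2 * ε)) * t) / (2 * hyperbolicFreq a ε γ) :=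
        hyperbolicMode_le_exp_div ((by positivity : 0 < ε * q ^ 2 / 2).trans_le hω) ht hgap
    _ ≤ exp (-t / (2 * ε)) / (ε * q ^ 2) := by
        rw [show -(1 / (2 * ε)) * t = -t / (2 * ε) by ring]
        exact div_le_div_of_nonneg_left (exp_nonneg _) (by positivity) (by linarith)

end Damping

lemma add_mul_le_of_div_mul_le {ℓ ε c : ℝ} {N : ℕ} (hℓ : 0 < ℓ) (hε : 0 < ε)
    (hN : ℓ / (π * ε) * c ≤ N + 1) (k : ℕ) :
    c + ε * (k * π / ℓ) ≤ ε * (((k + N + 1 : ℕ) : ℝ) * π / ℓ) := by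
  have hc : c ≤ ε * ((N + 1) * π / ℓ) := by
    have := mul_le_mul_of_nonneg_left hN (by positivity : 0 ≤ ε * π / ℓ)
    field_simp at this ⊢
    linarith
  push_cast
  have : ε * ((k + N + 1) * π / ℓ) = ε * (k * π / ℓ) + ε * ((N + 1) * π / ℓ) := by ring
  linarith

lemma hyperbolicMode_tail_le {a ε ℓ t : ℝ} {N : ℕ} (hℓ : 0 < ℓ) (hε : 0 < ε)
    (haε : a * ε ≤ 1) (hN : ℓ / (π * ε) * (1 + √(1 - a * ε)) ≤ N + 1) (ht : 0 ≤ t) (k : ℕ) :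
    hyperbolicMode (damping a ε (((k + N + 1 : ℕ) : ℝ) * π / ℓ))
        (hyperbolicFreq a ε (((k + N + 1 : ℕ) : ℝ) * π / ℓ)) t
      ≤ 4 * (t + (ℓ / π) ^ 2 / ε) * exp (-t / (2 * ε)) * (1 / ((k : ℝ) + 1) ^ 2) := by
  have hγ := add_mul_le_of_div_mul_le hℓ hε hN k
  have hE := exp_pos (-t / (2 * ε))
  have hX : 0 ≤ (ℓ / π) ^ 2 / ε := by positivity
  rcases k.eq_zero_or_pos with rfl | hk
  · refine (hyperbolicMode_le_mul_exp_of_tail hε haε (by simpa using hγ) ht).trans ?_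
    simp only [CharP.cast_eq_zero, zero_add, one_pow, div_one, mul_one]
    nlinarith
  have hk1 : (1 : ℝ) ≤ k := by exact_mod_cast hk
  have hsucc : 1 / (k : ℝ) ^ 2 ≤ 4 * (1 / ((k : ℝ) + 1) ^ 2) := by
    rw [div_le_iff₀ (by positivity)]; field_simp; nlinarith
  have hc : 0 ≤ t * exp (-t / (2 * ε)) * (1 / ((k : ℝ) + 1) ^ 2) := by positivity
  calc _ ≤ exp (-t / (2 * ε)) / (ε * (k * π / ℓ) ^ 2) :=
        hyperbolicMode_le_exp_div_of_tail hε haε (by positivity) hγ ht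
    _ = (ℓ / π) ^ 2 / ε * exp (-t / (2 * ε)) * (1 / (k : ℝ) ^ 2) := by field_simp
    _ ≤ (ℓ / π) ^ 2 / ε * exp (-t / (2 * ε)) * (4 * (1 / ((k : ℝ) + 1) ^ 2)) := by gcongr
    _ ≤ _ := by nlinarith

lemma hasSum_one_div_succ_sq : HasSum (fun k : ℕ => 1 / ((k : ℝ) + 1) ^ 2) (π ^ 2 / 6) := by
  simpa using (hasSum_nat_add_iff' 1).mpr hasSum_zeta_two

lemma add_div_mul_exp_neg_le {ε t B : ℝ} (hε : 0 < ε) (hε1 : ε ≤ 1) (ht : 1 ≤ t) (hB : 0 ≤ B) :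
    (t + B / ε) * exp (-t / (2 * ε)) ≤ 4 * (1 + B) * exp (-t / (4 * ε)) := by
  set u := t / (4 * ε) with hu_def
  have hu : u * exp (-u) ≤ 1 :=
    (mul_exp_neg_le_exp_neg_one u).trans (exp_le_one_iff.mpr (by norm_num))
  have hsplit : exp (-t / (2 * ε)) = exp (-u) * exp (-t / (4 * ε)) := by
    rw [← exp_add, hu_def]; congr 1; field_simp; ring
  have hprefactor : t + B / ε ≤ 4 * (1 + B) * u := by
    have h1 : t ≤ t / ε := le_div_self (by linarith) hε hε1
    have h2 : B / ε ≤ B * (t / ε) := by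
      rw [mul_div_assoc']; gcongr; nlinarith
    have : 4 * (1 + B) * u = t / ε + B * (t / ε) := by rw [hu_def]; field_simp
    linarith
  calc _ = (t + B / ε) * exp (-u) * exp (-t / (4 * ε)) := by rw [hsplit]; ring
    _ ≤ 4 * (1 + B) * u * exp (-u) * exp (-t / (4 * ε)) := by gcongr
    _ ≤ 4 * (1 + B) * exp (-t / (4 * ε)) := by
        rw [mul_assoc (4 * (1 + B)) u]
        exact mul_le_mul_of_nonneg_right (mul_le_of_le_one_right (by positivity) hu) (exp_nonneg _)

open Real in
theorem tail_hyperbolic_modes_estimate_general (a ℓ : ℝ)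
    (ha1 : a < 1) (hℓ : 0 < ℓ) :
    ∃ B₁ > (0 : ℝ), ∀ ε : ℝ, 0 < ε → ε < 1 →
      ∀ N₂ : ℕ,
        -- N₂ is the largest natural number smaller than (ℓ/(πε))(1 + √(1 - aε))
        ((N₂ : ℝ) < ℓ / (π * ε) * (1 + Real.sqrt (1 - a * ε)) ∧
          ℓ / (π * ε) * (1 + Real.sqrt (1 - a * ε)) ≤ (N₂ : ℝ) + 1) →
        ∀ t : ℝ, 1 ≤ t →
          (∑' k : ℕ,
            (fun n : ℕ =>
              Real.exp (-((a + ε * (n * π / ℓ) ^ 2) / 2) * t) *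
                Real.sinh (Real.sqrt (((a + ε * (n * π / ℓ) ^ 2) / 2) ^ 2 -
                    (n * π / ℓ) ^ 2) * t) /
                  Real.sqrt (((a + ε * (n * π / ℓ) ^ 2) / 2) ^ 2 - (n * π / ℓ) ^ 2))
              (k + N₂ + 1)) ≤ B₁ * Real.exp (-t / (4 * ε)) := by
  refine ⟨8 * (π ^ 2 + ℓ ^ 2) / 3, by positivity, fun ε hε hε1 N₂ hN t ht => ?_⟩
  have haε : a * ε ≤ 1 := by nlinarith
  have hmode := hyperbolicMode_tail_le hℓ hε haε hN.2 (by linarith : 0 ≤ t)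
  have hmajorant := hasSum_one_div_succ_sq.summable.mul_left
    (4 * (t + (ℓ / π) ^ 2 / ε) * exp (-t / (2 * ε)))
  have hsummable := hmajorant.of_nonneg_of_le
    (fun k => hyperbolicMode_nonneg (sqrt_nonneg _) (by linarith)) hmode
  calc _ ≤ ∑' k : ℕ, 4 * (t + (ℓ / π) ^ 2 / ε) * exp (-t / (2 * ε)) * (1 / ((k : ℝ) + 1) ^ 2) :=
        hsummable.tsum_le_tsum hmode hmajorant
    _ = 4 * (π ^ 2 / 6) * ((t + (ℓ / π) ^ 2 / ε) * exp (-t / (2 * ε))) := by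
        rw [tsum_mul_left, hasSum_one_div_succ_sq.tsum_eq]; ring
    _ ≤ 4 * (π ^ 2 / 6) * (4 * (1 + (ℓ / π) ^ 2) * exp (-t / (4 * ε))) := by
        have := add_div_mul_exp_neg_le hε hε1.le ht (sq_nonneg (ℓ / π))
        gcongr
    _ = _ := by field_simp; ring

open Real in
/-- Lemma 1 (tail estimate): the series of hyperbolic modes `n ≥ N₂ + 1` of the Green
function decays like `e^{-t/(4ε)}`, with constant `B₁` independent of `ε`. -/
theorem tail_hyperbolic_modes_estimate (a ℓ : ℝ)
    (ha : 0 < a) (ha1 : a < 1) (hℓ : 0 < ℓ) :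
    ∃ B₁ > (0 : ℝ), ∀ ε : ℝ, 0 < ε → ε < 1 →
      ∀ N₂ : ℕ,
        -- N₂ is the largest natural number smaller than (ℓ/(πε))(1 + √(1 - aε))
        ((N₂ : ℝ) < ℓ / (π * ε) * (1 + Real.sqrt (1 - a * ε)) ∧
          ℓ / (π * ε) * (1 + Real.sqrt (1 - a * ε)) ≤ (N₂ : ℝ) + 1) →
        ∀ t : ℝ, 1 ≤ t →
          (∑' k : ℕ,
            (fun n : ℕ =>
              Real.exp (-((a + ε * (n * π / ℓ) ^ 2) / 2) * t) *
                Real.sinh (Real.sqrt (((a + ε * (n * π / ℓ) ^ 2) / 2) ^ 2 -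
                    (n * π / ℓ) ^ 2) * t) /
                  Real.sqrt (((a + ε * (n * π / ℓ) ^ 2) / 2) ^ 2 - (n * π / ℓ) ^ 2))
              (k + N₂ + 1)) ≤ B₁ * Real.exp (-t / (4 * ε)) :=
  tail_hyperbolic_modes_estimate_general a ℓ ha1 hℓ
end

section
/- Let α > 0, γ = 0, and r₀ > 0. The function U(x,t) = 4 arctan( y + √(y² + 1) ) with y = r₀ e^{−(x−t)/α} satisfies the damped sine-Gordon equation U_xx − U_tt − α U_t = sin U on ℝ². -/
/-!
Since `w = y + √(y² + 1)` satisfies `w - w⁻¹ = 2y`, the arctangent addition formula gives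
`4 arctan w = π + 2 arctan y`. Hence `U(x, t) = φ(t - x)` with `φ(s) = π + 2 arctan (r₀ e^{s/α})`.
Any function of `t - x` has `U_xx = U_tt`, so the equation reduces to the first-order ODE
`α φ' = -sin φ`, which follows from `sin (π + 2 arctan y) = -2y / (1 + y²)`.
-/

open Real

theorem arctan_add_sqrt_sq_add_one (y : ℝ) :
    arctan (y + √(y ^ 2 + 1)) = π / 4 + arctan y / 2 := by
  set w := y + √(y ^ 2 + 1)
  have hsqrt : √(y ^ 2 + 1) ^ 2 = y ^ 2 + 1 := sq_sqrt (by positivity)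
  have hw : 0 < w := by
    have : |y| < √(y ^ 2 + 1) := by
      rw [← sqrt_sq_eq_abs]; exact sqrt_lt_sqrt (sq_nonneg y) (lt_add_one _)
    simp only [w]; linarith [neg_abs_le y]
  have hinv : w⁻¹ = √(y ^ 2 + 1) - y :=
    inv_eq_of_mul_eq_one_right (by simp only [w]; linear_combination hsqrt)
  have hsub : arctan w + arctan (-w⁻¹) = arctan y := by
    rw [arctan_add (by rw [mul_neg, mul_inv_cancel₀ hw.ne']; norm_num), mul_neg,
      mul_inv_cancel₀ hw.ne', hinv]
    congr 1
    simp only [w]; ring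
  rw [arctan_neg, arctan_inv_of_pos hw] at hsub
  linarith

theorem sin_pi_add_two_mul_arctan (y : ℝ) : sin (π + 2 * arctan y) = -(2 * y / (1 + y ^ 2)) := by
  rw [add_comm, sin_add_pi, sin_two_mul, sin_arctan, cos_arctan, mul_assoc, div_mul_div_comm,
    mul_one, mul_self_sqrt (by positivity), mul_div_assoc]

theorem deriv_deriv_comp_const_sub (f : ℝ → ℝ) (a x : ℝ) :
    deriv (fun y => deriv (fun z => f (a - z)) y) x = deriv (deriv f) (a - x) := by
  simp only [deriv_comp_const_sub, deriv.fun_neg, neg_neg]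

theorem deriv_deriv_comp_sub_const (f : ℝ → ℝ) (a x : ℝ) :
    deriv (fun y => deriv (fun z => f (z - a)) y) x = deriv (deriv f) (x - a) := by
  simp only [deriv_comp_sub_const]

noncomputable def kinkProfile (α r₀ s : ℝ) : ℝ := π + 2 * arctan (r₀ * exp (s / α))

theorem hasDerivAt_kinkProfile {α : ℝ} (hα : α ≠ 0) (r₀ s : ℝ) :
    HasDerivAt (kinkProfile α r₀) (-sin (kinkProfile α r₀ s) / α) s := by
  have hy : HasDerivAt (fun s => r₀ * exp (s / α)) (r₀ * exp (s / α) / α) s :=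
    ((((hasDerivAt_id s).div_const α).exp).const_mul r₀).congr_deriv (by simp only [id]; ring)
  refine ((hy.arctan.const_mul 2).const_add π).congr_deriv ?_
  rw [kinkProfile, sin_pi_add_two_mul_arctan]
  field_simp

theorem traveling_wave_damped_sine_gordon_general (α r₀ : ℝ) (hα : 0 < α)
    (U : ℝ → ℝ → ℝ)
    (hU : ∀ x t, U x t =
      4 * Real.arctan (r₀ * Real.exp (-(x - t) / α) +
        Real.sqrt ((r₀ * Real.exp (-(x - t) / α)) ^ 2 + 1))) :
    ∀ x t : ℝ,
      deriv (fun x' => deriv (fun x'' => U x'' t) x') x -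
        deriv (fun t' => deriv (fun t'' => U x t'') t') t -
        α * deriv (fun t' => U x t') t = Real.sin (U x t) := by
  have hU_kink : U = fun x t => kinkProfile α r₀ (t - x) := by
    ext x t
    rw [hU, arctan_add_sqrt_sq_add_one, kinkProfile, neg_sub]
    ring
  subst hU_kink
  intro x t
  rw [deriv_deriv_comp_const_sub, deriv_deriv_comp_sub_const, deriv_comp_sub_const,
    (hasDerivAt_kinkProfile hα.ne' r₀ _).deriv]
  field_simp
  ring

/-- The traveling wave `U(x,t) = 4 arctan (y + √(y²+1))`, `y = r₀ e^{-(x-t)/α}`,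
solves the damped sine-Gordon equation `U_xx - U_tt - α U_t = sin U` on `ℝ²`. -/
theorem traveling_wave_damped_sine_gordon (α r₀ : ℝ) (hα : 0 < α) (hr₀ : 0 < r₀)
    (U : ℝ → ℝ → ℝ)
    (hU : ∀ x t, U x t =
      4 * Real.arctan (r₀ * Real.exp (-(x - t) / α) +
        Real.sqrt ((r₀ * Real.exp (-(x - t) / α)) ^ 2 + 1))) :
    ∀ x t : ℝ,
      deriv (fun x' => deriv (fun x'' => U x'' t) x') x -
        deriv (fun t' => deriv (fun t'' => U x t'') t') t -
        α * deriv (fun t' => U x t') t = Real.sin (U x t) :=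
  traveling_wave_damped_sine_gordon_general α r₀ hα U hU
end

section
/- Suppose f: ℝ → ℝ satisfies df/dξ = −tanh f + (1/2)cosh f (case γ = 1) with sinh f(ξ) ≠ 1. Then −2/(sinh f(ξ) − 1) − ξ is constant; equivalently sinh f(ξ) = 1 + 2/(r₀ − ξ) for the constant r₀ = ξ₀ + 2/(sinh f(ξ₀) − 1). -/
/-- Integration of `f' = -tanh f + (1/2) cosh f` (case `γ = 1`) on an interval `(a, b)` of existence:
`-2/(sinh f - 1) - ξ` is constant, equivalently
`sinh (f ξ) = 1 + 2/(r₀ - ξ)` with `r₀ = ξ₀ + 2/(sinh (f ξ₀) - 1)`. -/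
theorem ode_gamma_one_integration (f : ℝ → ℝ) (a b : ℝ)
    (hf : ∀ ξ ∈ Set.Ioo a b, HasDerivAt f (-Real.tanh (f ξ) + (1 / 2) * Real.cosh (f ξ)) ξ)
    (hne : ∀ ξ ∈ Set.Ioo a b, Real.sinh (f ξ) ≠ 1) :
    (∀ ξ₁ ∈ Set.Ioo a b, ∀ ξ₂ ∈ Set.Ioo a b,
        -2 / (Real.sinh (f ξ₁) - 1) - ξ₁ = -2 / (Real.sinh (f ξ₂) - 1) - ξ₂) ∧
      ∀ ξ₀ ∈ Set.Ioo a b, ∀ ξ ∈ Set.Ioo a b,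
        Real.sinh (f ξ) = 1 + 2 / ((ξ₀ + 2 / (Real.sinh (f ξ₀) - 1)) - ξ) := by
  have key : ∀ ξ ∈ Set.Ioo a b,
      HasDerivAt (fun ξ => -2 / (Real.sinh (f ξ) - 1) - ξ) 0 ξ := by
    intro ξ hξ
    have hs : HasDerivAt (fun ξ => Real.sinh (f ξ) - 1)
        (Real.cosh (f ξ) * (-Real.tanh (f ξ) + (1 / 2) * Real.cosh (f ξ))) ξ := by
      exact ((Real.hasDerivAt_sinh (f ξ)).comp ξ (hf ξ hξ)).sub_const 1
    have hne' : Real.sinh (f ξ) - 1 ≠ 0 := sub_ne_zero.mpr (hne ξ hξ)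
    have hdiv := (hasDerivAt_const ξ (-2 : ℝ)).div hs hne'
    have hall := hdiv.sub (hasDerivAt_id ξ)
    convert hall using 1
    · rfl
    · rfl
    · rfl
    have hc : Real.cosh (f ξ) ≠ 0 := ne_of_gt (Real.cosh_pos _)
    rw [Real.tanh_eq_sinh_div_cosh]
    have hsq : Real.cosh (f ξ) ^ 2 = Real.sinh (f ξ) ^ 2 + 1 := Real.cosh_sq (f ξ)
    field_simp
    linear_combination (-1) * hsq
  have hconst : ∀ ξ₁ ∈ Set.Ioo a b, ∀ ξ₂ ∈ Set.Ioo a b,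
      -2 / (Real.sinh (f ξ₁) - 1) - ξ₁ = -2 / (Real.sinh (f ξ₂) - 1) - ξ₂ := by
    intro ξ₁ hξ₁ ξ₂ hξ₂
    exact isOpen_Ioo.is_const_of_deriv_eq_zero isPreconnected_Ioo
      (fun x hx => (key x hx).differentiableAt.differentiableWithinAt)
      (fun x hx => (key x hx).deriv) hξ₁ hξ₂
  refine ⟨hconst, fun ξ₀ hξ₀ ξ hξ => ?_⟩
  have h := hconst ξ₀ hξ₀ ξ hξ
  have h1 : Real.sinh (f ξ₀) - 1 ≠ 0 := sub_ne_zero.mpr (hne ξ₀ hξ₀)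
  have h2 : Real.sinh (f ξ) - 1 ≠ 0 := sub_ne_zero.mpr (hne ξ hξ)
  rw [neg_div, neg_div] at h
  have h3 : (ξ₀ + 2 / (Real.sinh (f ξ₀) - 1)) - ξ = 2 / (Real.sinh (f ξ) - 1) := by
    linarith
  rw [h3]
  field_simp
  ring
end
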